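/- EC₁ ≡_W RAT ≡_W SORT: the problem EC₁, the rationality problem RAT, and the sorting problem SORT are pairwise continuously Weihrauch equivalent. In fact RAT ≤_sW EC₁ ≤_sW SORT ≤_W RAT. -/

import Mathlib

open Filter Topology

abbrev Baire : Type := ℕ → ℕ

/-- The pairing `⟨p,q⟩(2n) = p(n)`, `⟨p,q⟩(2n+1) = q(n)`. -/
def pairB (p q : Baire) : Baire := fun n => if n % 2 = 0 then p (n / 2) else q (n / 2)

/-- A problem: a partial multivalued function on Baire space. -/
structure Problem where
  dom : Set Baire
  sol : Baire → Set Baire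

/-- Continuous Weihrauch reducibility. -/
def WRed (f g : Problem) : Prop :=
  ∃ (Kd Hd : Set Baire) (K H : Baire → Baire),
    ContinuousOn K Kd ∧ ContinuousOn H Hd ∧
      ∀ p ∈ f.dom, p ∈ Kd ∧ K p ∈ g.dom ∧
        ∀ q ∈ g.sol (K p), pairB p q ∈ Hd ∧ H (pairB p q) ∈ f.sol p

/-- Strong continuous Weihrauch reducibility. -/
def SWRed (f g : Problem) : Prop :=
  ∃ (Kd Hd : Set Baire) (K H : Baire → Baire),
    ContinuousOn K Kd ∧ ContinuousOn H Hd ∧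
      ∀ p ∈ f.dom, p ∈ Kd ∧ K p ∈ g.dom ∧
        ∀ q ∈ g.sol (K p), q ∈ Hd ∧ H q ∈ f.sol p

def WEquiv (f g : Problem) : Prop := WRed f g ∧ WRed g f
def SWEquiv (f g : Problem) : Prop := SWRed f g ∧ SWRed g f
def WLt (f g : Problem) : Prop := WRed f g ∧ ¬ WRed g f

/-- `range(p-1)`. -/
def rangeM (p : Baire) : Set ℕ := {n | ∃ i, p i = n + 1}

/-- Characteristic function of a set of naturals. -/
noncomputable def chi (A : Set ℕ) : Baire := A.indicator fun _ => 1

noncomputable def EC : Problem where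
  dom := Set.univ
  sol := fun p => {chi (rangeM p)}

noncomputable def EC1 : Problem where
  dom := {p | ((rangeM p)ᶜ).encard ≤ 1}
  sol := fun p => {chi (rangeM p)}

def pfst (r : Baire) : Baire := fun n => r (2 * n)
def psnd (r : Baire) : Baire := fun n => r (2 * n + 1)

noncomputable def SEP : Problem where
  dom := {r | rangeM (pfst r) ∩ rangeM (psnd r) = ∅}
  sol := fun r =>
    {s | ∃ A : Set ℕ, s = chi A ∧ rangeM (pfst r) ⊆ A ∧ A ⊆ (rangeM (psnd r))ᶜ}

noncomputable def SEP1 : Problem where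
  dom := {r | rangeM (pfst r) ∩ rangeM (psnd r) = ∅ ∧
    ((rangeM (pfst r) ∪ rangeM (psnd r))ᶜ).encard ≤ 1}
  sol := SEP.sol

/- rationals -/
def ratEnum (i : ℕ) : ℚ :=
  ((i.unpair.1 : ℚ) - (i.unpair.2.unpair.1 : ℚ)) / ((i.unpair.2.unpair.2 : ℚ) + 1)

def rhoCauchy (p : Baire) (x : ℝ) : Prop :=
  ∀ n, |(ratEnum (p n) : ℝ) - x| ≤ (2 : ℝ) ^ (-(n : ℤ))

def rhoNaive (p : Baire) (x : ℝ) : Prop :=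
  Tendsto (fun n => ((ratEnum (p n) : ℝ))) atTop (nhds x)

def rhoLt (p : Baire) (x : ℝ) : Prop := rangeM p = {n | (ratEnum n : ℝ) < x}
def rhoGt (p : Baire) (x : ℝ) : Prop := rangeM p = {n | x < (ratEnum n : ℝ)}

def rhoCfLt (p : Baire) (x : ℝ) : Prop :=
  (∀ n, p n ≤ 1) ∧ ∀ n, (p n = 1 ↔ (ratEnum n : ℝ) < x)
def rhoCfGt (p : Baire) (x : ℝ) : Prop :=
  (∀ n, p n ≤ 1) ∧ ∀ n, (p n = 1 ↔ x < (ratEnum n : ℝ))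

noncomputable def cfTail : List ℕ → ℝ
  | [] => 0
  | b :: l => 1 / ((b : ℝ) + cfTail l)

noncomputable def cfApprox (p : Baire) (k : ℕ) : ℝ :=
  ((Denumerable.ofNat ℤ (p 0) : ℤ) : ℝ) + cfTail ((List.range k).map fun i => p (i + 1))

def rhoCf (p : Baire) (x : ℝ) : Prop :=
  ((∀ i, 1 ≤ i → 1 ≤ p i) ∧ Tendsto (cfApprox p) atTop (nhds x)) ∨
    (∃ k, 1 ≤ k ∧ p k = 0 ∧ (∀ i, 1 ≤ i → i < k → 1 ≤ p i) ∧
      (2 ≤ k → 2 ≤ p (k - 1)) ∧ x = cfApprox p (k - 1))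

def rhoDec (p : Baire) (x : ℝ) : Prop :=
  (∀ n, 1 ≤ n → p n ≤ 9) ∧
    x = ((Denumerable.ofNat ℤ (p 0) : ℤ) : ℝ) + ∑' n : ℕ, (p (n + 1) : ℝ) / 10 ^ (n + 1)

/-- The implication problem between two representations of ℝ. -/
def implProblem (d1 d2 : Baire → ℝ → Prop) : Problem where
  dom := {p | ∃ x, d1 p x}
  sol := fun p => {q | ∃ x, d1 p x ∧ d2 q x}

/- trees / WKL / choice on Cantor space -/
def wordCode : List Bool → ℕ
  | [] => 0
  | b :: w => 2 * wordCode w + (if b then 2 else 1)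

def prefixList (x : Baire) (k : ℕ) : List Bool := (List.range k).map fun i => decide (x i = 1)

def isTreeCode (t : Baire) : Prop :=
  (∀ n, t n ≤ 1) ∧
    ∀ w v : List Bool, w <+: v → t (wordCode v) = 1 → t (wordCode w) = 1

def WKL : Problem where
  dom := {t | isTreeCode t ∧ {w : List Bool | t (wordCode w) = 1}.Infinite}
  sol := fun t => {x | (∀ n, x n ≤ 1) ∧ ∀ k, t (wordCode (prefixList x k)) = 1}

def Ap (p : Baire) : Set Baire :=
  {x | (∀ n, x n ≤ 1) ∧ ∀ k, wordCode (prefixList x k) ∉ rangeM p}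

def CCantor : Problem where
  dom := {p | (Ap p).Nonempty}
  sol := Ap

def Cle2 : Problem where
  dom := {p | (Ap p).Nonempty ∧ (Ap p).encard ≤ 2}
  sol := Ap

/- limit and parallelization -/
def projCount (r : Baire) (n : ℕ) : Baire := fun k => r (Nat.pair n k)

def limP : Problem where
  dom := {r | ∃ q : Baire, ∀ k, Tendsto (fun n => projCount r n k) atTop (nhds (q k))}
  sol := fun r => {q | ∀ k, Tendsto (fun n => projCount r n k) atTop (nhds (q k))}

def parallel (f : Problem) : Problem where
  dom := {r | ∀ n, projCount r n ∈ f.dom}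
  sol := fun r => {s | ∀ n, projCount s n ∈ f.sol (projCount r n)}

def MCT : Problem where
  dom := {r | ∃ xs : ℕ → ℝ, (∀ n, rhoCauchy (projCount r n) (xs n)) ∧
    Monotone xs ∧ BddAbove (Set.range xs)}
  sol := fun r => {q | ∃ xs : ℕ → ℝ, (∀ n, rhoCauchy (projCount r n) (xs n)) ∧
    Monotone xs ∧ BddAbove (Set.range xs) ∧ rhoCauchy q (⨆ n, xs n)}

/- SORT and RAT -/
open Classical in
noncomputable def sortOut (p : Baire) : Baire := fun k =>
  if {i | p i = 0}.Infinite then 0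
  else if k < {i | p i = 0}.ncard then 0 else 1

noncomputable def SORT : Problem where
  dom := {p | ∀ n, p n ≤ 1}
  sol := fun p => {sortOut p}

def znk (n : ℕ) : Baire := fun k => if k < n then 0 else 1

def RAT : Problem where
  dom := {p | ∃ x, rhoCauchy p x}
  sol := fun p => {s | ∃ x, rhoCauchy p x ∧
    ((∃ n, x = (ratEnum n : ℝ) ∧ s = znk n) ∨
      ((∀ r : ℚ, x ≠ (r : ℝ)) ∧ s = fun _ => 0))}

/- omniscience principles -/
def projFin (m i : ℕ) (r : Baire) : Baire := fun k => r (m * k + i - 1)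
def isZeroSeq (p : Baire) : Prop := ∀ k, p k = 0
def constSeq (i : ℕ) : Baire := fun _ => i

noncomputable def LPOn (n : ℕ) : Problem where
  dom := Set.univ
  sol := fun r => {constSeq ({i | 1 ≤ i ∧ i ≤ n ∧ isZeroSeq (projFin n i r)}.ncard)}

def LLPOn (n : ℕ) : Problem where
  dom := {r | {i | 1 ≤ i ∧ i ≤ n ∧ ¬ isZeroSeq (projFin n i r)}.encard ≤ 1}
  sol := fun r => {s | ∃ i, 1 ≤ i ∧ i ≤ n ∧ isZeroSeq (projFin n i r) ∧ s = constSeq i}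

def MLPOn (n : ℕ) : Problem where
  dom := {r | ∃ i, 1 ≤ i ∧ i ≤ n ∧ isZeroSeq (projFin n i r)}
  sol := fun r => {s | ∃ i, 1 ≤ i ∧ i ≤ n ∧ isZeroSeq (projFin n i r) ∧ s = constSeq i}

def LPO : Problem where
  dom := Set.univ
  sol := fun p => {s | (isZeroSeq p ∧ s = constSeq 1) ∨ (¬ isZeroSeq p ∧ s = constSeq 0)}

/- choice problems on ℕ etc. -/
def Cfin (n : ℕ) : Problem where
  dom := {p | ∃ i, i < n ∧ i ∉ rangeM p}
  sol := fun p => {s | ∃ i, i < n ∧ i ∉ rangeM p ∧ s = constSeq i}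

def ACCfin (n : ℕ) : Problem where
  dom := {p | (∃ i, i < n ∧ i ∉ rangeM p) ∧ ({i | i < n} ∩ rangeM p).encard ≤ 1}
  sol := (Cfin n).sol

def CNat : Problem where
  dom := {p | ∃ i, i ∉ rangeM p}
  sol := fun p => {s | ∃ i, i ∉ rangeM p ∧ s = constSeq i}

/- differentiation -/
instance : Countable (AddMonoidAlgebra ℚ ℕ) :=
  Function.Injective.countable (f := AddMonoidAlgebra.coeff)
    (fun a b h => by cases a; cases b; cases h; rfl)

instance : Countable (Polynomial ℚ) :=
  Polynomial.toFinsupp_injective.countable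

noncomputable def polyEnum : ℕ → Polynomial ℚ :=
  (exists_surjective_nat (Polynomial ℚ)).choose

noncomputable def polyFun (k : ℕ) : C(Set.Icc (0:ℝ) 1, ℝ) :=
  ⟨fun x => ((polyEnum k).map (algebraMap ℚ ℝ)).eval (x : ℝ),
   (((polyEnum k).map (algebraMap ℚ ℝ)).continuous).comp continuous_subtype_val⟩

noncomputable def deltaC (p : Baire) (f : C(Set.Icc (0:ℝ) 1, ℝ)) : Prop :=
  ∀ n, ‖f - polyFun (p n)‖ ≤ (2 : ℝ) ^ (-(n : ℤ))

def IsDerivOn (f g : C(Set.Icc (0:ℝ) 1, ℝ)) : Prop :=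
  ∀ x : Set.Icc (0:ℝ) 1,
    HasDerivWithinAt (Set.IccExtend (by norm_num : (0:ℝ) ≤ 1) f) (g x) (Set.Icc 0 1) (x : ℝ)

noncomputable def diffP : Problem where
  dom := {p | ∃ f g, deltaC p f ∧ IsDerivOn f g}
  sol := fun p => {q | ∃ f g, deltaC p f ∧ IsDerivOn f g ∧ deltaC q g}

/-!
`RAT ≤_sW EC₁`: enumerate every index `n` except the least index of the limit `x`; the Cauchy name
refutes `q_n = x` at a finite stage whenever it fails, and repeated indices of the same rational are
enumerated outright. The first gap of the characteristic function is then the answer of `RAT`.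

`EC₁ ≤_sW SORT`: write one zero for each `m` such that `{0, …, m-1} ⊆ range(p-1)`. If the complement
of `range(p-1)` is `{n}` there are exactly `n + 1` zeros, and if it is empty infinitely many; the
sorted sequence then shows the missing `n` as its last zero.

`SORT ≤_W RAT`: send `p` to `x = ∑_{p(i) = 0} 2^{-(i+1)}`, which is strictly monotone in the set of
zeros, and return `sortOut p` itself, ignoring the answer except for continuity: with infinitely
many zeros `sortOut p` is determined by finite prefixes of `p`; with finitely many, `x` is rational,
its index `n` fixes `x` for every nearby input with a nearby answer, and monotonicity then forbids
any new zero.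
-/

open PiNat

@[simp] lemma pfst_pairB (p q : Baire) : pfst (pairB p q) = p := by
  funext n
  simp [pfst, pairB]

@[simp] lemma psnd_pairB (p q : Baire) : psnd (pairB p q) = q := by
  funext n
  simp [psnd, pairB, Nat.add_mod, show (2 * n + 1) / 2 = n by omega]

lemma continuous_pfst : Continuous pfst :=
  continuous_pi fun n => continuous_apply (2 * n)

lemma continuous_psnd : Continuous psnd :=
  continuous_pi fun n => continuous_apply (2 * n + 1)

lemma pfst_mem_cylinder {r r' : Baire} {n : ℕ} (h : r' ∈ cylinder r (2 * n)) :
    pfst r' ∈ cylinder (pfst r) n :=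
  mem_cylinder_iff.2 fun i hi => mem_cylinder_iff.1 h (2 * i) (by omega)

lemma psnd_mem_cylinder {r r' : Baire} {n : ℕ} (h : r' ∈ cylinder r (2 * n)) :
    psnd r' ∈ cylinder (psnd r) n :=
  mem_cylinder_iff.2 fun i hi => mem_cylinder_iff.1 h (2 * i + 1) (by omega)

lemma ContinuousOn.pairB {A B : Baire → Baire} {s : Set Baire}
    (hA : ContinuousOn A s) (hB : ContinuousOn B s) :
    ContinuousOn (fun r => pairB (A r) (B r)) s := by
  refine continuousOn_pi.2 fun n => ?_
  by_cases h : n % 2 = 0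
  · simpa [_root_.pairB, h] using continuousOn_pi.1 hA (n / 2)
  · simpa [_root_.pairB, h] using continuousOn_pi.1 hB (n / 2)

lemma continuousOn_of_prefix_determined {H : Baire → Baire} {s : Set Baire}
    (h : ∀ r ∈ s, ∀ n, ∃ k, ∀ r' ∈ s, r' ∈ cylinder r k → H r' n = H r n) :
    ContinuousOn H s := by
  intro r hr
  refine tendsto_pi_nhds.2 fun n => ?_
  obtain ⟨k, hk⟩ := h r hr n
  have hcyl : cylinder r k ∈ 𝓝[s] r :=
    mem_nhdsWithin_of_mem_nhds ((isOpen_cylinder _ r k).mem_nhds (self_mem_cylinder r k))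
  refine tendsto_const_nhds.congr' ?_
  filter_upwards [hcyl, self_mem_nhdsWithin] with r' hr'k hr's
  exact (hk r' hr's hr'k).symm

lemma continuous_of_prefix_determined {H : Baire → Baire}
    (h : ∀ n, ∃ k, ∀ r r', r' ∈ cylinder r k → H r' n = H r n) : Continuous H :=
  continuousOn_univ.1 <| continuousOn_of_prefix_determined fun r _ n =>
    (h n).imp fun _ hk r' _ => hk r r'

lemma SWRed.wRed {f g : Problem} (h : SWRed f g) : WRed f g := by
  obtain ⟨Kd, Hd, K, H, hK, hH, hred⟩ := h
  refine ⟨Kd, psnd ⁻¹' Hd, K, H ∘ psnd, hK,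
    hH.comp continuous_psnd.continuousOn (Set.mapsTo_preimage _ _), fun p hp => ?_⟩
  obtain ⟨hpK, hKp, hsol⟩ := hred p hp
  exact ⟨hpK, hKp, fun q hq => by simpa using hsol q hq⟩

lemma WRed.trans {f g h : Problem} (hfg : WRed f g) (hgh : WRed g h) : WRed f h := by
  obtain ⟨Kd₁, Hd₁, K₁, H₁, hK₁, hH₁, hred₁⟩ := hfg
  obtain ⟨Kd₂, Hd₂, K₂, H₂, hK₂, hH₂, hred₂⟩ := hgh
  set inner : Baire → Baire := fun r => pairB (K₁ (pfst r)) (psnd r)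
  set outer : Baire → Baire := fun r => pairB (pfst r) (H₂ (inner r))
  set Hd := {r | pfst r ∈ Kd₁ ∧ inner r ∈ Hd₂ ∧ outer r ∈ Hd₁}
  have hinner : ContinuousOn inner Hd :=
    (hK₁.comp continuous_pfst.continuousOn fun _ hr => hr.1).pairB continuous_psnd.continuousOn
  have houter : ContinuousOn outer Hd :=
    continuous_pfst.continuousOn.pairB (hH₂.comp hinner fun _ hr => hr.2.1)
  refine ⟨Kd₁ ∩ K₁ ⁻¹' Kd₂, Hd, K₂ ∘ K₁, H₁ ∘ outer,
    hK₂.comp (hK₁.mono Set.inter_subset_left) fun _ hp => hp.2,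
    hH₁.comp houter fun _ hr => hr.2.2, fun p hp => ?_⟩
  obtain ⟨hpK₁, hK₁p, hsol₁⟩ := hred₁ p hp
  obtain ⟨hpK₂, hK₂p, hsol₂⟩ := hred₂ (K₁ p) hK₁p
  refine ⟨⟨hpK₁, hpK₂⟩, hK₂p, fun q hq => ?_⟩
  obtain ⟨hq₂, hH₂q⟩ := hsol₂ q hq
  obtain ⟨hq₁, hH₁q⟩ := hsol₁ _ hH₂q
  exact ⟨by simpa [Hd, inner, outer, hpK₁, hq₂] using hq₁, by simpa [inner, outer] using hH₁q⟩

lemma ratEnum_surjective : Function.Surjective ratEnum := by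
  intro r
  refine ⟨Nat.pair r.num.toNat (Nat.pair (-r.num).toNat (r.den - 1)), ?_⟩
  have hnum : ((r.num.toNat : ℕ) : ℚ) - ((-r.num).toNat : ℕ) = r.num := by
    exact_mod_cast Int.toNat_sub_toNat_neg r.num
  have hden : ((r.den - 1 : ℕ) : ℚ) + 1 = r.den := by
    rw [Nat.cast_sub r.den_pos, Nat.cast_one, sub_add_cancel]
  simp only [ratEnum, Nat.unpair_pair, hnum, hden, Rat.num_div_den]

namespace rhoCauchy

variable {p : Baire} {x : ℝ}

lemma abs_sub_le (hx : rhoCauchy p x) (n : ℕ) : |(ratEnum (p n) : ℝ) - x| ≤ 2⁻¹ ^ n := by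
  simpa [zpow_neg, zpow_natCast, inv_pow] using hx n

lemma unique {y : ℝ} (hx : rhoCauchy p x) (hy : rhoCauchy p y) : x = y := by
  by_contra hne
  obtain ⟨n, hn⟩ := exists_pow_lt_of_lt_one (half_pos (abs_pos.2 (sub_ne_zero.2 hne)))
    (by norm_num : (2⁻¹ : ℝ) < 1)
  have := _root_.abs_sub_le x (ratEnum (p n)) y
  linarith [abs_sub_comm x (ratEnum (p n)), hx.abs_sub_le n, hy.abs_sub_le n]

lemma exists_lt_abs_sub_iff (hx : rhoCauchy p x) (q : ℚ) :
    (∃ s, (2⁻¹ : ℚ) ^ s < |q - ratEnum (p s)|) ↔ (q : ℝ) ≠ x := by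
  constructor
  · rintro ⟨s, hs⟩ rfl
    have hs' := (Rat.cast_lt (K := ℝ)).2 hs
    push_cast at hs'
    linarith [abs_sub_comm (q : ℝ) (ratEnum (p s)), hx.abs_sub_le s]
  · intro hne
    obtain ⟨s, hs⟩ := exists_pow_lt_of_lt_one (half_pos (abs_pos.2 (sub_ne_zero.2 hne)))
      (by norm_num : (2⁻¹ : ℝ) < 1)
    refine ⟨s, ?_⟩
    have := _root_.abs_sub_le (q : ℝ) (ratEnum (p s)) x
    have : (2⁻¹ : ℝ) ^ s < |(q : ℝ) - ratEnum (p s)| := by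
      linarith [abs_sub_comm x (ratEnum (p s)), hx.abs_sub_le s]
    exact (Rat.cast_lt (K := ℝ)).1 (by push_cast; exact this)

end rhoCauchy

@[simp] lemma chi_apply_of_mem {A : Set ℕ} {n : ℕ} (h : n ∈ A) : chi A n = 1 := by
  simp [chi, h]

@[simp] lemma chi_apply_of_notMem {A : Set ℕ} {n : ℕ} (h : n ∉ A) : chi A n = 0 := by
  simp [chi, h]

def ratToEC1Input (p : Baire) (k : ℕ) : ℕ :=
  if (∃ m < k.unpair.1, ratEnum m = ratEnum k.unpair.1) ∨
      (2⁻¹ : ℚ) ^ k.unpair.2 < |ratEnum k.unpair.1 - ratEnum (p k.unpair.2)|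
  then k.unpair.1 + 1 else 0

def firstZeroCode (q : Baire) (k : ℕ) : ℕ := if ∀ j ≤ k, q j = 1 then 0 else 1

lemma continuous_ratToEC1Input : Continuous ratToEC1Input :=
  continuous_of_prefix_determined fun k => ⟨k + 1, fun p p' h => by
    rw [ratToEC1Input, ratToEC1Input,
      mem_cylinder_iff.1 h _ (Nat.lt_succ_of_le (Nat.unpair_right_le k))]⟩

lemma continuous_firstZeroCode : Continuous firstZeroCode :=
  continuous_of_prefix_determined fun k => ⟨k + 1, fun q q' h => by
    have : (∀ j ≤ k, q' j = 1) ↔ ∀ j ≤ k, q j = 1 :=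
      forall₂_congr fun j hj => by rw [mem_cylinder_iff.1 h j (by omega)]
    simp only [firstZeroCode, this]⟩

lemma firstZeroCode_chi_compl_singleton (n : ℕ) : firstZeroCode (chi {n}ᶜ) = znk n := by
  funext k
  by_cases hk : k < n
  · simp only [firstZeroCode, znk, hk, if_true, ite_eq_left_iff]
    exact fun h => (h fun j hj => chi_apply_of_mem (Set.mem_compl_singleton_iff.2 (by omega))).elim
  · simp only [firstZeroCode, znk, hk, if_false, ite_eq_right_iff]
    exact fun h => by simpa using h n (by omega)

lemma firstZeroCode_chi_univ : firstZeroCode (chi Set.univ) = fun _ => 0 := by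
  funext k
  simp [firstZeroCode]

lemma mem_rangeM_ratToEC1Input {p : Baire} {n : ℕ} :
    n ∈ rangeM (ratToEC1Input p) ↔ (∃ m < n, ratEnum m = ratEnum n) ∨
      ∃ s, (2⁻¹ : ℚ) ^ s < |ratEnum n - ratEnum (p s)| := by
  constructor
  · rintro ⟨k, hk⟩
    rw [ratToEC1Input] at hk
    split_ifs at hk with h
    obtain rfl : k.unpair.1 = n := by omega
    exact h.imp_right fun h => ⟨_, h⟩
  · rintro (h | ⟨s, hs⟩)
    · exact ⟨Nat.pair n 0, by simp [ratToEC1Input, h]⟩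
    · exact ⟨Nat.pair n s, by simp only [ratToEC1Input, Nat.unpair_pair, hs, or_true, if_true]⟩

lemma compl_rangeM_ratToEC1Input {p : Baire} {x : ℝ} (hx : rhoCauchy p x) :
    (rangeM (ratToEC1Input p))ᶜ = {n | IsLeast {m | (ratEnum m : ℝ) = x} n} := by
  ext n
  simp only [Set.mem_compl_iff, mem_rangeM_ratToEC1Input, hx.exists_lt_abs_sub_iff,
    Set.mem_ofPred_eq, IsLeast, mem_lowerBounds]
  constructor
  · intro h
    push Not at h
    refine ⟨h.2, fun m hm => not_lt.1 fun hmn => h.1 m hmn ?_⟩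
    exact_mod_cast hm.trans h.2.symm
  · rintro ⟨hn, hmin⟩ (⟨m, hmn, hm⟩ | hne)
    · exact (hmin m (by rw [hm, hn])).not_gt hmn
    · exact hne hn

lemma RAT_swRed_EC1 : SWRed RAT EC1 := by
  refine ⟨Set.univ, Set.univ, ratToEC1Input, firstZeroCode,
    continuous_ratToEC1Input.continuousOn, continuous_firstZeroCode.continuousOn, ?_⟩
  rintro p ⟨x, hx⟩
  have hcompl := compl_rangeM_ratToEC1Input hx
  refine ⟨trivial, Set.encard_le_one_iff.2 fun a b ha hb => ?_, ?_⟩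
  · rw [hcompl] at ha hb
    exact ha.unique hb
  rintro q (rfl : q = _)
  refine ⟨trivial, x, hx, ?_⟩
  rcases Set.eq_empty_or_nonempty {m | (ratEnum m : ℝ) = x} with hS | hS
  · have hrange : rangeM (ratToEC1Input p) = Set.univ := by
      rw [← compl_compl (rangeM _), hcompl, Set.compl_univ_iff]
      simp [hS, IsLeast]
    refine Or.inr ⟨fun r hr => ?_, by rw [hrange, firstZeroCode_chi_univ]⟩
    obtain ⟨n, rfl⟩ := ratEnum_surjective r
    exact hS.subset hr.symm
  · have hleast := isLeast_csInf hS
    have hrange : rangeM (ratToEC1Input p) = {sInf {m | (ratEnum m : ℝ) = x}}ᶜ := by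
      rw [← compl_compl (rangeM _), hcompl]
      congr 1
      ext n
      exact ⟨fun h => h.unique hleast, fun h => h ▸ hleast⟩
    exact Or.inl ⟨_, hleast.1.symm, by rw [hrange, firstZeroCode_chi_compl_singleton]⟩

lemma sortOut_of_infinite {r : Baire} (h : {i | r i = 0}.Infinite) : sortOut r = fun _ => 0 := by
  funext k
  simp [sortOut, h]

lemma sortOut_of_finite {r : Baire} (h : {i | r i = 0}.Finite) :
    sortOut r = znk {i | r i = 0}.ncard := by
  funext k
  simp [sortOut, znk, Set.not_infinite.2 h]

def EnumeratesBelow (p : Baire) (n s : ℕ) : Prop := ∀ j < n, ∃ i < s, p i = j + 1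

lemma EnumeratesBelow.mono {p : Baire} {n s t : ℕ} (h : EnumeratesBelow p n s) (hst : s ≤ t) :
    EnumeratesBelow p n t :=
  fun j hj => (h j hj).imp fun _ hi => ⟨by omega, hi.2⟩

lemma enumeratesBelow_congr {p p' : Baire} {n s t : ℕ} (h : p' ∈ cylinder p t) (hst : s ≤ t) :
    EnumeratesBelow p' n s ↔ EnumeratesBelow p n s :=
  forall₂_congr fun _ _ => exists_congr fun i => and_congr_right fun hi => by
    rw [mem_cylinder_iff.1 h i (by omega)]

lemma exists_enumeratesBelow_iff {p : Baire} {n : ℕ} :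
    (∃ s, EnumeratesBelow p n s) ↔ Set.Iio n ⊆ rangeM p := by
  refine ⟨fun ⟨s, hs⟩ j hj => (hs j hj).imp fun _ hi => hi.2, fun h => ?_⟩
  induction n with
  | zero => exact ⟨0, fun j hj => absurd hj (Nat.not_lt_zero j)⟩
  | succ n ih =>
    obtain ⟨s, hs⟩ := ih fun j hj => h (Set.mem_Iio.2 (Nat.lt_succ_of_lt hj))
    obtain ⟨i, hi⟩ := h (Set.mem_Iio.2 n.lt_succ_self)
    refine ⟨max s (i + 1), fun j hj => ?_⟩
    rcases Nat.lt_succ_iff_lt_or_eq.1 hj with hj | rfl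
    · exact (hs.mono (le_max_left _ _)) j hj
    · exact ⟨i, by omega, hi⟩

open Classical in
noncomputable def ec1ToSortInput (p : Baire) (k : ℕ) : ℕ :=
  if EnumeratesBelow p k.unpair.1 k.unpair.2 ∧
      ∀ s < k.unpair.2, ¬ EnumeratesBelow p k.unpair.1 s
  then 0 else 1

def lastZeroChi (q : Baire) (n : ℕ) : ℕ := if q n = 0 ∧ q (n + 1) = 1 then 0 else 1

lemma continuous_ec1ToSortInput : Continuous ec1ToSortInput :=
  continuous_of_prefix_determined fun k => ⟨k, fun p p' h => by
    have hk := Nat.unpair_right_le k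
    have hmin : (∀ s < k.unpair.2, ¬ EnumeratesBelow p' k.unpair.1 s) ↔
        ∀ s < k.unpair.2, ¬ EnumeratesBelow p k.unpair.1 s :=
      forall₂_congr fun s hs => by rw [enumeratesBelow_congr h (by omega : s ≤ k)]
    classical
    exact if_congr (and_congr (enumeratesBelow_congr h hk) hmin) rfl rfl⟩

lemma continuous_lastZeroChi : Continuous lastZeroChi :=
  continuous_of_prefix_determined fun n => ⟨n + 2, fun q q' h => by
    rw [lastZeroChi, lastZeroChi, mem_cylinder_iff.1 h n (by omega),
      mem_cylinder_iff.1 h (n + 1) (by omega)]⟩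

lemma lastZeroChi_znk (n : ℕ) : lastZeroChi (znk (n + 1)) = chi {n}ᶜ := by
  funext k
  by_cases hk : k = n
  · simp [lastZeroChi, znk, hk]
  · rw [chi_apply_of_mem hk, lastZeroChi, if_neg]
    rcases Nat.lt_or_gt_of_ne hk with hlt | hgt
    · simp [znk, show k + 1 < n + 1 by omega]
    · simp [znk, show ¬ k < n + 1 by omega]

lemma lastZeroChi_zero : lastZeroChi (fun _ => 0) = chi Set.univ := by
  funext k
  simp [lastZeroChi]

lemma injOn_unpair_fst_zeros_ec1ToSortInput (p : Baire) :
    Set.InjOn (fun k => k.unpair.1) {k | ec1ToSortInput p k = 0} := by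
  intro k hk k' hk' he
  simp only [Set.mem_ofPred_eq, ec1ToSortInput, ite_eq_left_iff, one_ne_zero, imp_false,
    not_not] at hk hk'
  simp only at he
  have hs : k.unpair.2 = k'.unpair.2 := by
    rcases lt_trichotomy k.unpair.2 k'.unpair.2 with hlt | heq | hgt
    · exact absurd (he ▸ hk.1) (hk'.2 _ hlt)
    · exact heq
    · exact absurd (he ▸ hk'.1) (hk.2 _ hgt)
  rw [← Nat.pair_unpair k, ← Nat.pair_unpair k', he, hs]

lemma image_zeros_ec1ToSortInput (p : Baire) :
    (fun k => k.unpair.1) '' {k | ec1ToSortInput p k = 0} = {n | Set.Iio n ⊆ rangeM p} := by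
  classical
  ext n
  simp only [Set.mem_image, Set.mem_ofPred_eq, ← exists_enumeratesBelow_iff]
  constructor
  · rintro ⟨k, hk, rfl⟩
    simp only [ec1ToSortInput, ite_eq_left_iff, one_ne_zero, imp_false, not_not] at hk
    exact ⟨_, hk.1⟩
  · intro h
    refine ⟨Nat.pair n (Nat.find h), ?_, by simp⟩
    simp only [ec1ToSortInput, Nat.unpair_pair]
    exact if_pos ⟨Nat.find_spec h, fun s => Nat.find_min h⟩

lemma sortOut_ec1ToSortInput_of_rangeM_eq_univ {p : Baire} (h : rangeM p = Set.univ) :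
    sortOut (ec1ToSortInput p) = fun _ => 0 := by
  refine sortOut_of_infinite ((Set.infinite_image_iff
    (injOn_unpair_fst_zeros_ec1ToSortInput p)).1 ?_)
  simpa [image_zeros_ec1ToSortInput, h] using Set.infinite_univ

lemma sortOut_ec1ToSortInput_of_compl_rangeM_eq {p : Baire} {n : ℕ}
    (h : (rangeM p)ᶜ = {n}) : sortOut (ec1ToSortInput p) = znk (n + 1) := by
  have hinj := injOn_unpair_fst_zeros_ec1ToSortInput p
  have himage : (fun k => k.unpair.1) '' {k | ec1ToSortInput p k = 0} = Set.Iic n := by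
    rw [image_zeros_ec1ToSortInput, ← compl_compl (rangeM p), h]
    ext m
    simp only [Set.mem_ofPred_eq, Set.mem_Iic]
    exact ⟨fun hm => not_lt.1 fun hnm => hm hnm rfl,
      fun hm j hj => Set.mem_compl_singleton_iff.2 (Nat.ne_of_lt (lt_of_lt_of_le hj hm))⟩
  have hfin : {k | ec1ToSortInput p k = 0}.Finite :=
    Set.Finite.of_finite_image (himage ▸ Set.finite_Iic n) hinj
  rw [sortOut_of_finite hfin, ← hinj.ncard_image, himage, Set.ncard_Iic_nat]

lemma EC1_swRed_SORT : SWRed EC1 SORT := by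
  refine ⟨Set.univ, Set.univ, ec1ToSortInput, lastZeroChi,
    continuous_ec1ToSortInput.continuousOn, continuous_lastZeroChi.continuousOn, ?_⟩
  intro p hp
  refine ⟨trivial, fun k => by unfold ec1ToSortInput; split_ifs <;> omega, ?_⟩
  rintro q (rfl : q = _)
  refine ⟨trivial, ?_⟩
  rcases Set.encard_le_one_iff_eq.1 hp with hc | ⟨n, hc⟩
  · rw [Set.compl_empty_iff] at hc
    rw [sortOut_ec1ToSortInput_of_rangeM_eq_univ hc, lastZeroChi_zero, ← hc]
    rfl
  · rw [sortOut_ec1ToSortInput_of_compl_rangeM_eq hc, lastZeroChi_znk, ← hc, compl_compl]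
    rfl

lemma tsum_sub_sum_range_le_of_le_inv_two_pow {f : ℕ → ℝ} (h0 : ∀ i, 0 ≤ f i)
    (hf : ∀ i, f i ≤ 2⁻¹ ^ (i + 1)) (n : ℕ) :
    ∑' i, f i - ∑ i ∈ Finset.range n, f i ≤ 2⁻¹ ^ n := by
  have hgeom : Summable fun i : ℕ => (2⁻¹ : ℝ) ^ i :=
    summable_geometric_of_lt_one (by norm_num) (by norm_num)
  have hf' : Summable f := hgeom.comp_injective (add_left_injective 1) |>.of_nonneg_of_le h0 hf
  rw [← hf'.sum_add_tsum_nat_add n, add_sub_cancel_left]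
  calc ∑' i, f (i + n) ≤ ∑' i : ℕ, (2⁻¹ : ℝ) ^ (i + n + 1) :=
        ((summable_nat_add_iff n).2 hf').tsum_le_tsum (fun i => hf _)
          (hgeom.comp_injective (add_left_injective (n + 1)))
    _ = 2⁻¹ ^ n := by
        simp only [pow_add, pow_one, tsum_mul_right, tsum_geometric_inv_two]
        ring

def zeroWeight (p : Baire) (i : ℕ) : ℚ := if p i = 0 then 2⁻¹ ^ (i + 1) else 0

noncomputable def zeroSum (p : Baire) : ℝ := ∑' i, (zeroWeight p i : ℝ)

lemma zeroWeight_nonneg (p : Baire) (i : ℕ) : (0 : ℝ) ≤ zeroWeight p i := by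
  unfold zeroWeight
  split_ifs <;> simp

lemma zeroWeight_le (p : Baire) (i : ℕ) : (zeroWeight p i : ℝ) ≤ 2⁻¹ ^ (i + 1) := by
  unfold zeroWeight
  split_ifs <;> simp

lemma summable_zeroWeight (p : Baire) : Summable fun i => (zeroWeight p i : ℝ) :=
  (summable_geometric_two' 1).of_nonneg_of_le (zeroWeight_nonneg p) fun i => by
    simpa [pow_succ, div_eq_mul_inv, mul_comm] using zeroWeight_le p i

noncomputable def sortToRatInput (p : Baire) (n : ℕ) : ℕ :=
  Function.surjInv ratEnum_surjective (∑ i ∈ Finset.range n, zeroWeight p i)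

lemma continuous_sortToRatInput : Continuous sortToRatInput :=
  continuous_of_prefix_determined fun n => ⟨n, fun p p' h => by
    refine congrArg _ (Finset.sum_congr rfl fun i hi => ?_)
    rw [zeroWeight, zeroWeight, mem_cylinder_iff.1 h i (Finset.mem_range.1 hi)]⟩

lemma rhoCauchy_sortToRatInput (p : Baire) : rhoCauchy (sortToRatInput p) (zeroSum p) := by
  intro n
  rw [sortToRatInput, Function.surjInv_eq ratEnum_surjective, zpow_neg, zpow_natCast, ← inv_pow,
    Rat.cast_sum, abs_sub_comm, zeroSum, abs_of_nonneg (sub_nonneg.2 <|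
      (summable_zeroWeight p).sum_le_tsum _ fun i _ => zeroWeight_nonneg p i)]
  exact tsum_sub_sum_range_le_of_le_inv_two_pow (zeroWeight_nonneg p) (zeroWeight_le p) n

lemma zeroSum_lt_of_ssubset {p p' : Baire} (h : {i | p i = 0} ⊂ {i | p' i = 0}) :
    zeroSum p < zeroSum p' := by
  obtain ⟨hsub, i, hi', hi⟩ := Set.ssubset_iff_exists.1 h
  refine Summable.tsum_lt_tsum_of_nonneg (i := i) (zeroWeight_nonneg p) (fun j => ?_) ?_
    (summable_zeroWeight p')
  · unfold zeroWeight
    by_cases hj : p j = 0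
    · simp [hj, show p' j = 0 from hsub hj]
    · simp only [hj, if_false, Rat.cast_zero]
      exact_mod_cast zeroWeight_nonneg p' j
  · simp [zeroWeight, show p' i = 0 from hi', show p i ≠ 0 from hi]

lemma zeroSum_eq_sum_range {p : Baire} {N : ℕ} (h : ∀ i, N ≤ i → p i ≠ 0) :
    zeroSum p = ((∑ i ∈ Finset.range N, zeroWeight p i : ℚ) : ℝ) := by
  rw [zeroSum, Rat.cast_sum]
  exact tsum_eq_sum fun i hi => by
    simp [zeroWeight, h i (not_lt.1 (Finset.mem_range.not.1 hi))]

lemma rhoCauchy_of_mem_RAT_sol {p q : Baire} {n : ℕ} (hq : q ∈ RAT.sol p)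
    (hqn : q ∈ cylinder (znk n) (n + 1)) : rhoCauchy p (ratEnum n) := by
  obtain ⟨x, hx, ⟨n', rfl, rfl⟩ | ⟨-, rfl⟩⟩ := hq
  · obtain rfl : n' = n := by
      by_contra hne
      rcases Nat.lt_or_gt_of_ne hne with hlt | hgt
      · simpa [znk, hlt] using mem_cylinder_iff.1 hqn n' (by omega)
      · simpa [znk, hgt] using mem_cylinder_iff.1 hqn n (by omega)
    exact hx
  · simpa [znk] using mem_cylinder_iff.1 hqn n (by omega)

lemma sortOut_prefix_determined_of_infinite {p : Baire} (h : {i | p i = 0}.Infinite) (m : ℕ) :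
    ∃ N, ∀ p' ∈ cylinder p N, sortOut p' m = sortOut p m := by
  obtain ⟨t, ht, hcard⟩ := h.exists_subset_card_eq (m + 1)
  refine ⟨t.sup id + 1, fun p' hp' => ?_⟩
  have hsub : (t : Set ℕ) ⊆ {i | p' i = 0} := fun i hi => by
    rw [Set.mem_ofPred_eq,
      mem_cylinder_iff.1 hp' i (Nat.lt_succ_of_le (Finset.le_sup (f := id) hi))]
    exact ht hi
  rw [sortOut_of_infinite h]
  by_cases hfin : {i | p' i = 0}.Finite
  · have := Set.ncard_le_ncard hsub hfin
    rw [Set.ncard_coe_finset, hcard] at this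
    simp [sortOut_of_finite hfin, znk, show m < {i | p' i = 0}.ncard by omega]
  · rw [sortOut_of_infinite hfin]

lemma zeros_prefix_determined_of_finite {p q : Baire} (h : {i | p i = 0}.Finite)
    (hq : q ∈ RAT.sol (sortToRatInput p)) :
    ∃ N, ∀ p' q', q' ∈ RAT.sol (sortToRatInput p') → p' ∈ cylinder p N → q' ∈ cylinder q N →
      {i | p' i = 0} = {i | p i = 0} := by
  obtain ⟨B, hB⟩ := h.bddAbove
  have hlarge : ∀ i, B + 1 ≤ i → p i ≠ 0 := fun i hi hpi => by have := hB hpi; omega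
  obtain ⟨x, hx, ⟨n, hxn, rfl⟩ | ⟨hirr, -⟩⟩ := hq
  swap
  · exact (hirr _ (((rhoCauchy_sortToRatInput p).unique hx).symm.trans
      (zeroSum_eq_sum_range hlarge))).elim
  refine ⟨max (B + 1) (n + 1), fun p' q' hq' hp' hq'n => ?_⟩
  have hval : zeroSum p' = zeroSum p := by
    rw [(rhoCauchy_sortToRatInput p').unique (rhoCauchy_of_mem_RAT_sol hq'
        (cylinder_anti _ (le_max_right _ _) hq'n)),
      (rhoCauchy_sortToRatInput p).unique hx, hxn]
  have hsub : {i | p i = 0} ⊆ {i | p' i = 0} := fun i hi => by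
    have : i < B + 1 := Nat.lt_succ_of_le (hB hi)
    rw [Set.mem_ofPred_eq, mem_cylinder_iff.1 hp' i (by omega)]
    exact hi
  by_contra hne
  exact (zeroSum_lt_of_ssubset (hsub.ssubset_of_ne (Ne.symm hne))).ne' hval

lemma sortOut_prefix_determined {p q : Baire} (hq : q ∈ RAT.sol (sortToRatInput p)) (m : ℕ) :
    ∃ N, ∀ p' q', q' ∈ RAT.sol (sortToRatInput p') → p' ∈ cylinder p N → q' ∈ cylinder q N →
      sortOut p' m = sortOut p m := by
  by_cases h : {i | p i = 0}.Finite
  · obtain ⟨N, hN⟩ := zeros_prefix_determined_of_finite h hq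
    refine ⟨N, fun p' q' hq' hp' hq'N => ?_⟩
    unfold sortOut
    rw [hN p' q' hq' hp' hq'N]
  · obtain ⟨N, hN⟩ := sortOut_prefix_determined_of_infinite h m
    exact ⟨N, fun p' _ _ hp' _ => hN p' hp'⟩

lemma SORT_wRed_RAT : WRed SORT RAT := by
  refine ⟨Set.univ, {r | psnd r ∈ RAT.sol (sortToRatInput (pfst r))}, sortToRatInput,
    sortOut ∘ pfst, continuous_sortToRatInput.continuousOn, ?_, fun p _ => ?_⟩
  · refine continuousOn_of_prefix_determined fun r hr m => ?_
    obtain ⟨N, hN⟩ := sortOut_prefix_determined (p := pfst r) (q := psnd r) hr m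
    refine ⟨2 * N, fun r' hr' hr'N => ?_⟩
    exact hN (pfst r') (psnd r') hr' (pfst_mem_cylinder hr'N) (psnd_mem_cylinder hr'N)
  · refine ⟨trivial, ⟨_, rhoCauchy_sortToRatInput p⟩, fun q hq => ?_⟩
    simp only [Set.mem_ofPred_eq, pfst_pairB, psnd_pairB, Function.comp_apply]
    exact ⟨hq, rfl⟩

/-- `EC₁ ≡_W RAT ≡_W SORT`; in fact `RAT ≤_sW EC₁ ≤_sW SORT ≤_W RAT`. -/
theorem EC1_RAT_SORT :
    (WEquiv EC1 RAT ∧ WEquiv RAT SORT) ∧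
    SWRed RAT EC1 ∧ SWRed EC1 SORT ∧ WRed SORT RAT := by
  have hRE := RAT_swRed_EC1.wRed
  have hES := EC1_swRed_SORT.wRed
  exact ⟨⟨⟨hES.trans SORT_wRed_RAT, hRE⟩, ⟨hRE.trans hES, SORT_wRed_RAT⟩⟩,
    RAT_swRed_EC1, EC1_swRed_SORT, SORT_wRed_RAT⟩
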